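/- arXiv:1806.02428 — 3 statements merged into one kernel-verified Lean document; each statement's English description precedes it below -/
import Mathlib

section
/- For the doubled quiver Â Â_n (vertices 1,…,n, arrows α_i: i→i+1 and β_i: i+1→i, with relations α_i β_i = 0 = β_i α_i), every representation I_{i,j}^Σ is indecomposable; here for 1 ≤ i ≤ j ≤ n and a sign sequence Σ ∈ {+,−}^{j−i}, the representation I_{i,j}^Σ places ℂ at vertices k with i ≤ k ≤ j and 0 elsewhere, with the arrow (k → k+1) acting as identity and (k+1 → k) as zero when Σ gives +, and the reverse when Σ gives −. -/
/-! Representations of the doubled quiver `ÂÂ_n`: vertices `1, …, n`, arrows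
`α_k : k → k+1` and `β_k : k+1 → k`, with relations `α_k β_k = 0 = β_k α_k`. -/

/-- A representation of the quiver `ÂÂ_n` with relations "all 2-cycles are zero".
Vertex `k+1` (for `k : Fin n`) carries the vector space `V k`. -/
structure AARep (n : ℕ) where
  V : Fin n → Type
  [acg : ∀ k, AddCommGroup (V k)]
  [mod : ∀ k, Module ℂ (V k)]
  a : ∀ (k : ℕ) (h : k + 1 < n), V ⟨k, Nat.lt_of_succ_lt h⟩ →ₗ[ℂ] V ⟨k + 1, h⟩
  b : ∀ (k : ℕ) (h : k + 1 < n), V ⟨k + 1, h⟩ →ₗ[ℂ] V ⟨k, Nat.lt_of_succ_lt h⟩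
  hab : ∀ (k : ℕ) (h : k + 1 < n), (a k h).comp (b k h) = 0
  hba : ∀ (k : ℕ) (h : k + 1 < n), (b k h).comp (a k h) = 0

attribute [instance] AARep.acg AARep.mod

/-- A morphism of representations of `ÂÂ_n`. -/
structure AAHom {n : ℕ} (R S : AARep n) where
  φ : ∀ k, R.V k →ₗ[ℂ] S.V k
  ha : ∀ (k : ℕ) (h : k + 1 < n),
    (φ ⟨k + 1, h⟩).comp (R.a k h) = (S.a k h).comp (φ ⟨k, Nat.lt_of_succ_lt h⟩)
  hb : ∀ (k : ℕ) (h : k + 1 < n),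
    (φ ⟨k, Nat.lt_of_succ_lt h⟩).comp (R.b k h) = (S.b k h).comp (φ ⟨k + 1, h⟩)

/-- A representation of `ÂÂ_n` is indecomposable iff it is nonzero and its only
idempotent endomorphisms are `0` and the identity. -/
def AAIndec {n : ℕ} (R : AARep n) : Prop :=
  (∃ k, ∃ x : R.V k, x ≠ 0) ∧
    ∀ e : AAHom R R, (∀ k, (e.φ k).comp (e.φ k) = e.φ k) →
      (∀ k, e.φ k = 0) ∨ (∀ k, e.φ k = LinearMap.id)

/-- The vector space at vertex `v`: `ℂ` if `i ≤ v ≤ j`, `0` otherwise. -/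
noncomputable def Sm (i j v : ℕ) : Submodule ℂ ℂ :=
  if i ≤ v ∧ v ≤ j then ⊤ else ⊥

/-- The map on the arrow `v → v+1` of `I_{i,j}^Σ`: the identity if the sign at
this arrow is `+` (and both endpoints lie in `[i,j]`), zero otherwise. -/
noncomputable def amap (i j : ℕ) (sgn : ℕ → Bool) (v : ℕ) :
    Sm i j v →ₗ[ℂ] Sm i j (v + 1) :=
  if h : i ≤ v ∧ v + 1 ≤ j ∧ sgn (v - i) = true then
    Submodule.inclusion (by
      have h2 : Sm i j (v + 1) = ⊤ := if_pos ⟨by omega, h.2.1⟩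
      rw [h2]; exact le_top)
  else 0

/-- The map on the arrow `v+1 → v` of `I_{i,j}^Σ`: the identity if the sign at
this arrow is `−` (and both endpoints lie in `[i,j]`), zero otherwise. -/
noncomputable def bmap (i j : ℕ) (sgn : ℕ → Bool) (v : ℕ) :
    Sm i j (v + 1) →ₗ[ℂ] Sm i j v :=
  if h : i ≤ v ∧ v + 1 ≤ j ∧ sgn (v - i) = false then
    Submodule.inclusion (by
      have h2 : Sm i j v = ⊤ := if_pos ⟨h.1, by omega⟩
      rw [h2]; exact le_top)
  else 0

lemma ab_zero (i j : ℕ) (sgn : ℕ → Bool) (v : ℕ) :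
    (amap i j sgn v).comp (bmap i j sgn v) = 0 := by
  by_cases hc : i ≤ v ∧ v + 1 ≤ j ∧ sgn (v - i) = true
  · have hnb : ¬ (i ≤ v ∧ v + 1 ≤ j ∧ sgn (v - i) = false) := by
      rintro ⟨-, -, hf⟩; rw [hc.2.2] at hf; exact Bool.noConfusion hf
    rw [bmap, dif_neg hnb, LinearMap.comp_zero]
  · rw [amap, dif_neg hc, LinearMap.zero_comp]

lemma ba_zero (i j : ℕ) (sgn : ℕ → Bool) (v : ℕ) :
    (bmap i j sgn v).comp (amap i j sgn v) = 0 := by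
  by_cases hc : i ≤ v ∧ v + 1 ≤ j ∧ sgn (v - i) = false
  · have hna : ¬ (i ≤ v ∧ v + 1 ≤ j ∧ sgn (v - i) = true) := by
      rintro ⟨-, -, hf⟩; rw [hc.2.2] at hf; exact Bool.noConfusion hf
    rw [amap, dif_neg hna, LinearMap.comp_zero]
  · rw [bmap, dif_neg hc, LinearMap.zero_comp]

/-- The representation `I_{i,j}^Σ` of `ÂÂ_n`: the space `ℂ` at the vertices `v`
with `i ≤ v ≤ j` and `0` elsewhere; on the pair of arrows between vertices `v`
and `v+1` (inside `[i,j]`), the sign `Σ (v - i)` decides which of the two maps is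
the identity, the other being zero (`true` = `+`: the forward map `v → v+1` is
the identity; `false` = `−`: the backward map `v+1 → v` is the identity). -/
noncomputable def Irep (n i j : ℕ) (sgn : ℕ → Bool) : AARep n where
  V := fun k => Sm i j (k.val + 1)
  a := fun k _ => amap i j sgn (k + 1)
  b := fun k _ => bmap i j sgn (k + 1)
  hab := fun k _ => ab_zero i j sgn (k + 1)
  hba := fun k _ => ba_zero i j sgn (k + 1)

/-! Every endomorphism of `I_{i,j}^Σ` is a scalar: the space at each vertex is `ℂ` or `0`, and
between two consecutive vertices of `[i, j]` one of the two arrows is the identity, so the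
commutation relation with that arrow forces equal scalars at both ends. An idempotent scalar is
`0` or `1`, which is indecomposability. -/

theorem AAIndec.of_forall_eq_smul_id {n : ℕ} {R : AARep n} (hne : ∃ k, ∃ x : R.V k, x ≠ 0)
    (hscalar : ∀ e : AAHom R R, ∃ c : ℂ, ∀ k, e.φ k = c • LinearMap.id) : AAIndec R := by
  refine ⟨hne, fun e he => ?_⟩
  obtain ⟨c, hc⟩ := hscalar e
  obtain ⟨k, x, hx⟩ := hne
  have hidem : IsIdempotentElem c := smul_left_injective ℂ hx <| by
    simpa [hc k, smul_smul] using LinearMap.congr_fun (he k) x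
  rcases IsIdempotentElem.iff_eq_zero_or_one.mp hidem with rfl | rfl
  · exact Or.inl fun k => by rw [hc k, zero_smul]
  · exact Or.inr fun k => by rw [hc k, one_smul]

namespace LinearMap

variable {R M N : Type*} [CommSemiring R] [AddCommMonoid M] [Module R M] [AddCommMonoid N]
  [Module R N] {f : M →ₗ[R] M} {f' : N →ₗ[R] N} {c : R}

theorem eq_smul_id_of_comp_eq_comp_of_surjective {g : M →ₗ[R] N} (hg : Function.Surjective g)
    (hcomm : f'.comp g = g.comp f) (hf : f = c • id) : f' = c • id := by
  ext y
  obtain ⟨x, rfl⟩ := hg y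
  simpa [hf] using LinearMap.congr_fun hcomm x

theorem eq_smul_id_of_comp_eq_comp_of_injective {g : N →ₗ[R] M} (hg : Function.Injective g)
    (hcomm : f.comp g = g.comp f') (hf : f = c • id) : f' = c • id := by
  ext y
  apply hg
  simpa [hf] using (LinearMap.congr_fun hcomm y).symm

end LinearMap

theorem Submodule.exists_linearMap_eq_smul_id {K : Type*} [Field K] (p : Submodule K K)
    (f : p →ₗ[K] p) : ∃ c : K, f = c • LinearMap.id := by
  by_cases h1 : (1 : K) ∈ p
  · refine ⟨f ⟨1, h1⟩, LinearMap.ext fun x => Subtype.ext ?_⟩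
    have hx : x = (x : K) • (⟨1, h1⟩ : p) := Subtype.ext (by simp)
    conv_lhs => rw [hx, map_smul]
    simp [mul_comm]
  · have hp : ∀ x : p, x = 0 := by
      intro x
      by_contra hx
      have hx' : (x : K) ≠ 0 := by simpa using hx
      exact h1 (by simpa [inv_mul_cancel₀ hx'] using p.smul_mem (x : K)⁻¹ x.2)
    exact ⟨0, LinearMap.ext fun x => (hp _).trans (hp _).symm⟩

section Sm

variable {i j v : ℕ} {sgn : ℕ → Bool}

theorem mem_Sm (hv : i ≤ v ∧ v ≤ j) (x : ℂ) : x ∈ Sm i j v := by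
  rw [Sm, if_pos hv]
  trivial

theorem subsingleton_Sm (hv : ¬(i ≤ v ∧ v ≤ j)) : Subsingleton (Sm i j v) := by
  rw [Sm, if_neg hv]
  infer_instance

theorem amap_surjective (h : i ≤ v ∧ v + 1 ≤ j ∧ sgn (v - i) = true) :
    Function.Surjective (amap i j sgn v) := by
  rw [amap, dif_pos h]
  exact fun y => ⟨⟨y, mem_Sm ⟨h.1, by omega⟩ y⟩, rfl⟩

theorem bmap_injective (h : i ≤ v ∧ v + 1 ≤ j ∧ sgn (v - i) = false) :
    Function.Injective (bmap i j sgn v) := by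
  rw [bmap, dif_pos h]
  exact Submodule.inclusion_injective _

end Sm

namespace Irep

variable {n i j : ℕ} {sgn : ℕ → Bool} (e : AAHom (Irep n i j sgn) (Irep n i j sgn)) {c : ℂ}

theorem eq_smul_id_succ {m : ℕ} (hm : m + 1 < n) (hi : i ≤ m + 1) (hj : m + 2 ≤ j)
    (h : e.φ ⟨m, by omega⟩ = c • LinearMap.id) : e.φ ⟨m + 1, hm⟩ = c • LinearMap.id := by
  cases hs : sgn (m + 1 - i)
  · exact LinearMap.eq_smul_id_of_comp_eq_comp_of_injective
      (bmap_injective ⟨hi, hj, hs⟩) (e.hb m hm) h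
  · exact LinearMap.eq_smul_id_of_comp_eq_comp_of_surjective
      (amap_surjective ⟨hi, hj, hs⟩) (e.ha m hm) h

theorem eq_smul_id_of_le (hn : i - 1 < n) (h : e.φ ⟨i - 1, hn⟩ = c • LinearMap.id) :
    ∀ m, i - 1 ≤ m → ∀ (hm : m < n), m + 1 ≤ j → e.φ ⟨m, hm⟩ = c • LinearMap.id := by
  refine Nat.le_induction (fun _ _ => h) fun m _ ih hmn hj => ?_
  exact eq_smul_id_succ e hmn (by omega) hj (ih (by omega) (by omega))

theorem exists_eq_smul_id : ∃ c : ℂ, ∀ k, e.φ k = c • LinearMap.id := by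
  by_cases hn : i - 1 < n
  · obtain ⟨c, hc⟩ := Submodule.exists_linearMap_eq_smul_id _ (e.φ ⟨i - 1, hn⟩)
    refine ⟨c, fun ⟨m, hm⟩ => ?_⟩
    by_cases hv : i ≤ m + 1 ∧ m + 1 ≤ j
    · exact eq_smul_id_of_le e hn hc m (by omega) hm hv.2
    · have : Subsingleton ((Irep n i j sgn).V ⟨m, hm⟩) := subsingleton_Sm hv
      exact Subsingleton.elim _ _
  · refine ⟨0, fun ⟨m, hm⟩ => ?_⟩
    have : Subsingleton ((Irep n i j sgn).V ⟨m, hm⟩) := subsingleton_Sm (by omega)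
    exact Subsingleton.elim _ _

theorem exists_ne_zero (h1 : 1 ≤ i) (hij : i ≤ j) (hin : i ≤ n) :
    ∃ k, ∃ x : (Irep n i j sgn).V k, x ≠ 0 :=
  ⟨⟨i - 1, by omega⟩, ⟨1, mem_Sm (v := i - 1 + 1) ⟨by omega, by omega⟩ 1⟩,
    fun h => one_ne_zero (congrArg Subtype.val h)⟩

end Irep

/-- For all `1 ≤ i ≤ j ≤ n` and every sign sequence `Σ`, the representation
`I_{i,j}^Σ` of the doubled quiver `ÂÂ_n` is indecomposable. -/
theorem stmt_11 (n i j : ℕ) (h1 : 1 ≤ i) (hij : i ≤ j) (hjn : j ≤ n)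
    (sgn : ℕ → Bool) : AAIndec (Irep n i j sgn) :=
  AAIndec.of_forall_eq_smul_id (Irep.exists_ne_zero h1 hij (hij.trans hjn))
    Irep.exists_eq_smul_id
end

section
/- The quadratic form q̂(x) = Σ_{i=1}^8 x_i² − x₁x₂ − x₂x₃ − x₃x₄ − x₄x₅ − x₃x₆ − x₂x₇ − x₄x₈ + x₁x₇ + x₅x₈ on ℤ^8 is positive semi-definite, and q̂(x) = 0 if and only if x is an integer multiple of (1,3,4,3,1,2,1,1). -/
/-- The Tits quadratic form of the quiver `B̂₈`. -/
def qhat (x : Fin 8 → ℤ) : ℤ :=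
  (∑ i : Fin 8, x i ^ 2) - x 0 * x 1 - x 1 * x 2 - x 2 * x 3 - x 3 * x 4
    - x 2 * x 5 - x 1 * x 6 - x 3 * x 7 + x 0 * x 6 + x 4 * x 7

/-- The Tits form `q̂` of `B̂₈` is positive semi-definite on `ℤ^8`, and `q̂(x) = 0`
iff `x` is an integer multiple of `(1,3,4,3,1,2,1,1)`. -/
theorem stmt_13 (x : Fin 8 → ℤ) :
    0 ≤ qhat x ∧ (qhat x = 0 ↔ ∃ c : ℤ, x = c • ![1, 3, 4, 3, 1, 2, 1, 1]) := by
  have key : 120 * qhat x =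
      30 * (2*x 0 - x 1 + x 6)^2 + 10 * (3*x 1 - 2*x 2 - x 6)^2
      + 5 * (4*x 2 - 3*x 3 - 3*x 5 - x 6)^2
      + 3 * (5*x 3 - 4*x 4 - 3*x 5 - x 6 - 4*x 7)^2
      + 2 * (6*x 4 - 3*x 5 - x 6 + x 7)^2
      + 30 * (x 5 - x 6 - x 7)^2 + 40 * (x 6 - x 7)^2 := by
    simp only [qhat, Fin.sum_univ_eight]
    ring
  have hpos : 0 ≤ qhat x := by
    nlinarith [sq_nonneg (2*x 0 - x 1 + x 6), sq_nonneg (3*x 1 - 2*x 2 - x 6),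
      sq_nonneg (4*x 2 - 3*x 3 - 3*x 5 - x 6),
      sq_nonneg (5*x 3 - 4*x 4 - 3*x 5 - x 6 - 4*x 7),
      sq_nonneg (6*x 4 - 3*x 5 - x 6 + x 7),
      sq_nonneg (x 5 - x 6 - x 7), sq_nonneg (x 6 - x 7)]
  refine ⟨hpos, ⟨fun h => ?_, fun ⟨c, hc⟩ => ?_⟩⟩
  · rw [h, mul_zero] at key
    have s0 := sq_nonneg (2*x 0 - x 1 + x 6)
    have s1 := sq_nonneg (3*x 1 - 2*x 2 - x 6)
    have s2 := sq_nonneg (4*x 2 - 3*x 3 - 3*x 5 - x 6)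
    have s3 := sq_nonneg (5*x 3 - 4*x 4 - 3*x 5 - x 6 - 4*x 7)
    have s4 := sq_nonneg (6*x 4 - 3*x 5 - x 6 + x 7)
    have s5 := sq_nonneg (x 5 - x 6 - x 7)
    have s6 := sq_nonneg (x 6 - x 7)
    have e0 : 2*x 0 - x 1 + x 6 = 0 := by
      have : (2*x 0 - x 1 + x 6)^2 = 0 := by linarith
      exact pow_eq_zero_iff two_ne_zero |>.mp this
    have e1 : 3*x 1 - 2*x 2 - x 6 = 0 := by
      have : (3*x 1 - 2*x 2 - x 6)^2 = 0 := by linarith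
      exact pow_eq_zero_iff two_ne_zero |>.mp this
    have e2 : 4*x 2 - 3*x 3 - 3*x 5 - x 6 = 0 := by
      have : (4*x 2 - 3*x 3 - 3*x 5 - x 6)^2 = 0 := by linarith
      exact pow_eq_zero_iff two_ne_zero |>.mp this
    have e3 : 5*x 3 - 4*x 4 - 3*x 5 - x 6 - 4*x 7 = 0 := by
      have : (5*x 3 - 4*x 4 - 3*x 5 - x 6 - 4*x 7)^2 = 0 := by linarith
      exact pow_eq_zero_iff two_ne_zero |>.mp this
    have e4 : 6*x 4 - 3*x 5 - x 6 + x 7 = 0 := by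
      have : (6*x 4 - 3*x 5 - x 6 + x 7)^2 = 0 := by linarith
      exact pow_eq_zero_iff two_ne_zero |>.mp this
    have e5 : x 5 - x 6 - x 7 = 0 := by
      have : (x 5 - x 6 - x 7)^2 = 0 := by linarith
      exact pow_eq_zero_iff two_ne_zero |>.mp this
    have e6 : x 6 - x 7 = 0 := by
      have : (x 6 - x 7)^2 = 0 := by linarith
      exact pow_eq_zero_iff two_ne_zero |>.mp this
    refine ⟨x 7, ?_⟩
    funext i
    fin_cases i
    · show x 0 = x 7 * 1; linarith
    · show x 1 = x 7 * 3; linarith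
    · show x 2 = x 7 * 4; linarith
    · show x 3 = x 7 * 3; linarith
    · show x 4 = x 7 * 1; linarith
    · show x 5 = x 7 * 2; linarith
    · show x 6 = x 7 * 1; linarith
    · show x 7 = x 7 * 1; linarith
  · subst hc
    have g0 : 2*(c • ![1, 3, 4, 3, 1, 2, 1, 1] : Fin 8 → ℤ) 0 - (c • ![1, 3, 4, 3, 1, 2, 1, 1] : Fin 8 → ℤ) 1 + (c • ![1, 3, 4, 3, 1, 2, 1, 1] : Fin 8 → ℤ) 6 = 0 := by
      show 2*(c*1) - c*3 + c*1 = 0; ring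
    have g1 : 3*(c • ![1, 3, 4, 3, 1, 2, 1, 1] : Fin 8 → ℤ) 1 - 2*(c • ![1, 3, 4, 3, 1, 2, 1, 1] : Fin 8 → ℤ) 2 - (c • ![1, 3, 4, 3, 1, 2, 1, 1] : Fin 8 → ℤ) 6 = 0 := by
      show 3*(c*3) - 2*(c*4) - c*1 = 0; ring
    have g2 : 4*(c • ![1, 3, 4, 3, 1, 2, 1, 1] : Fin 8 → ℤ) 2 - 3*(c • ![1, 3, 4, 3, 1, 2, 1, 1] : Fin 8 → ℤ) 3 - 3*(c • ![1, 3, 4, 3, 1, 2, 1, 1] : Fin 8 → ℤ) 5 - (c • ![1, 3, 4, 3, 1, 2, 1, 1] : Fin 8 → ℤ) 6 = 0 := by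
      show 4*(c*4) - 3*(c*3) - 3*(c*2) - c*1 = 0; ring
    have g3 : 5*(c • ![1, 3, 4, 3, 1, 2, 1, 1] : Fin 8 → ℤ) 3 - 4*(c • ![1, 3, 4, 3, 1, 2, 1, 1] : Fin 8 → ℤ) 4 - 3*(c • ![1, 3, 4, 3, 1, 2, 1, 1] : Fin 8 → ℤ) 5 - (c • ![1, 3, 4, 3, 1, 2, 1, 1] : Fin 8 → ℤ) 6 - 4*(c • ![1, 3, 4, 3, 1, 2, 1, 1] : Fin 8 → ℤ) 7 = 0 := by
      show 5*(c*3) - 4*(c*1) - 3*(c*2) - c*1 - 4*(c*1) = 0; ring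
    have g4 : 6*(c • ![1, 3, 4, 3, 1, 2, 1, 1] : Fin 8 → ℤ) 4 - 3*(c • ![1, 3, 4, 3, 1, 2, 1, 1] : Fin 8 → ℤ) 5 - (c • ![1, 3, 4, 3, 1, 2, 1, 1] : Fin 8 → ℤ) 6 + (c • ![1, 3, 4, 3, 1, 2, 1, 1] : Fin 8 → ℤ) 7 = 0 := by
      show 6*(c*1) - 3*(c*2) - c*1 + c*1 = 0; ring
    have g5 : (c • ![1, 3, 4, 3, 1, 2, 1, 1] : Fin 8 → ℤ) 5 - (c • ![1, 3, 4, 3, 1, 2, 1, 1] : Fin 8 → ℤ) 6 - (c • ![1, 3, 4, 3, 1, 2, 1, 1] : Fin 8 → ℤ) 7 = 0 := by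
      show c*2 - c*1 - c*1 = 0; ring
    have g6 : (c • ![1, 3, 4, 3, 1, 2, 1, 1] : Fin 8 → ℤ) 6 - (c • ![1, 3, 4, 3, 1, 2, 1, 1] : Fin 8 → ℤ) 7 = 0 := by
      show c*1 - c*1 = 0; ring
    have h120 : (120:ℤ) * qhat (c • ![1, 3, 4, 3, 1, 2, 1, 1]) = 0 := by
      rw [key, g0, g1, g2, g3, g4, g5, g6]; norm_num
    linarith
end

section
/- Let J be an invertible skew-symmetric 2n×2n complex matrix and let Sp_{2n}(ℂ) = {g ∈ GL_{2n}(ℂ) : gᵀ J g = J}. Two 2n×m complex matrices A and B lie in the same orbit under the action of Sp_{2n}(ℂ) × GL_m(ℂ) given by (g,h)·M = g M h⁻¹ if and only if rank(A) = rank(B) and rank(Aᵀ J A) = rank(Bᵀ J B). -/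
/-!
The orbit of `M` is governed by its column space `W` together with the form restricted to `W`.
Every subspace `W` of a symplectic space has a symplectic basis `(eᵢ, fᵢ)` such that `W` is spanned
by `e₁, …, e_{c+d}` and `f₁, …, f_c`: while the form does not vanish on `W`, split off a hyperbolic
plane inside `W`, afterwards a hyperbolic plane through a vector of `W`, and continue in the
symplectic complement of the plane. Writing `M = N X` with the columns of `N` these `2c + d`
vectors and `X` surjective, `rank M = 2c + d` and `Mᵀ J M = Xᵀ (Nᵀ J N) X` has rank `2c`. If `A`
and `B` share these invariants, the symplectic map carrying the adapted basis of `B` to that of `A`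
maps `N_B` to `N_A`, and the surjections `X_A`, `X_B` differ by an invertible right factor.
-/

open Matrix Module Submodule Set
open LinearMap (BilinForm)

section LinearAlgebra

variable {K : Type*} [Field K]

theorem LinearMap.exists_linearEquiv_comp_eq {U R : Type*} [AddCommGroup U] [Module K U]
    [FiniteDimensional K U] [AddCommGroup R] [Module K R] {f g : U →ₗ[K] R}
    (hf : Function.Surjective f) (hg : Function.Surjective g) :
    ∃ φ : U ≃ₗ[K] U, f ∘ₗ φ = g := by
  obtain ⟨s, hs⟩ := f.exists_rightInverse_of_surjective (range_eq_top.2 hf)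
  obtain ⟨t, ht⟩ := g.exists_rightInverse_of_surjective (range_eq_top.2 hg)
  have hker : finrank K (ker g) = finrank K (ker f) := by
    have hf' := f.finrank_range_add_finrank_ker
    have hg' := g.finrank_range_add_finrank_ker
    rw [range_eq_top.2 hf] at hf'
    rw [range_eq_top.2 hg] at hg'
    omega
  let τ := LinearEquiv.ofFinrankEq _ _ hker
  let π : U →ₗ[K] ker g := (LinearMap.id - t ∘ₗ g).codRestrict (ker g) fun u => by
    simp [← LinearMap.comp_apply g t, ht]
  -- a section of `f` applied after `g`, corrected by an isomorphism `ker g ≃ ker f`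
  let ψ : U →ₗ[K] U := s ∘ₗ g + (ker f).subtype ∘ₗ τ.toLinearMap ∘ₗ π
  have hfψ : f ∘ₗ ψ = g := by
    ext u
    simp [ψ, ← LinearMap.comp_apply f s, hs]
  have hψ : Function.Injective ψ := by
    refine (injective_iff_map_eq_zero ψ).2 fun u hu => ?_
    have hgu : g u = 0 := by rw [← hfψ, LinearMap.comp_apply, hu, map_zero]
    have hπ : π u = 0 := τ.map_eq_zero_iff.1 (by simpa [ψ, hgu] using hu)
    simpa [π, hgu] using congrArg Subtype.val hπ
  exact ⟨.ofInjectiveEndo ψ hψ, hfψ⟩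

namespace Matrix

variable {ι κ σ : Type*} [Fintype κ] [Fintype σ] [DecidableEq σ]

theorem rank_mul_eq_left_of_mul_eq_one {X : Matrix σ κ K} {Y : Matrix κ σ K} (hXY : X * Y = 1)
    (N : Matrix ι σ K) : (N * X).rank = N.rank :=
  le_antisymm (rank_mul_le_left _ _)
    (by simpa [Matrix.mul_assoc, hXY] using rank_mul_le_left (N * X) Y)

theorem rank_transpose_mul_mul_of_mul_eq_one {X : Matrix σ κ K} {Y : Matrix κ σ K}
    (hXY : X * Y = 1) (C : Matrix σ σ K) : (Xᵀ * C * X).rank = C.rank := by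
  rw [rank_mul_eq_left_of_mul_eq_one hXY, ← rank_transpose, transpose_mul, transpose_transpose,
    rank_mul_eq_left_of_mul_eq_one hXY, rank_transpose]

theorem rank_transpose_mul_fromBlocks_zero_mul [Fintype ι] [DecidableEq ι]
    {X : Matrix (ι ⊕ σ) κ K} {Y : Matrix κ (ι ⊕ σ) K} (hXY : X * Y = 1) (C : Matrix ι ι K) :
    (Xᵀ * fromBlocks C 0 0 (0 : Matrix σ σ K) * X).rank = C.rank := by
  set L : Matrix ι (ι ⊕ σ) K := fromCols 1 0
  have hC : fromBlocks C 0 0 (0 : Matrix σ σ K) = Lᵀ * C * L := by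
    ext (i | i) (j | j) <;> simp [L, transpose_fromCols, fromRows_mul, mul_fromCols]
  have hLX : (L * X) * (Y * Lᵀ) = 1 := by
    simp [Matrix.mul_assoc, ← Matrix.mul_assoc X, hXY, L, transpose_fromCols, fromCols_mul_fromRows]
  rw [hC, ← rank_transpose_mul_mul_of_mul_eq_one hLX C]
  simp [Matrix.mul_assoc, transpose_mul]

theorem exists_isUnit_eq_mul_of_mul_eq_one [DecidableEq κ] {X X' : Matrix σ κ K}
    {Y Y' : Matrix κ σ K} (hXY : X * Y = 1) (hXY' : X' * Y' = 1) :
    ∃ H : Matrix κ κ K, IsUnit H ∧ X = X' * H := by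
  have hsurj {X : Matrix σ κ K} {Y : Matrix κ σ K} (h : X * Y = 1) :
      Function.Surjective (toLin' X) :=
    mulVec_surjective_iff_exists_right_inverse.2 ⟨Y, h⟩
  obtain ⟨φ, hφ⟩ := LinearMap.exists_linearEquiv_comp_eq (hsurj hXY') (hsurj hXY)
  refine ⟨LinearMap.toMatrix' φ, LinearMap.isUnit_toMatrix'_iff.2
    ((Module.End.isUnit_iff _).2 φ.bijective), toLin'.injective ?_⟩
  rw [toLin'_mul, toLin'_toMatrix', hφ]

theorem exists_mul_eq_of_range_eq [DecidableEq κ] {M : Matrix ι κ K} {N : Matrix ι σ K}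
    (hN : Function.Injective N.mulVec)
    (h : LinearMap.range N.mulVecLin = LinearMap.range M.mulVecLin) :
    ∃ (X : Matrix σ κ K) (Y : Matrix κ σ K), X * Y = 1 ∧ M = N * X := by
  have hcol (j : κ) : M.col j ∈ LinearMap.range N.mulVecLin :=
    h ▸ ⟨Pi.single j 1, by simp⟩
  choose x hx using hcol
  have hM : M = N * (of x)ᵀ := by
    ext i j
    simpa [mulVec, dotProduct, mul_apply] using (congrFun (hx j) i).symm
  have hX : Function.Surjective (of x)ᵀ.mulVec := fun v => by
    obtain ⟨u, hu⟩ : N *ᵥ v ∈ LinearMap.range M.mulVecLin := h ▸ ⟨v, rfl⟩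
    exact ⟨u, hN (by rw [mulVec_mulVec, ← hM]; exact hu)⟩
  obtain ⟨Y, hY⟩ := mulVec_surjective_iff_exists_right_inverse.1 hX
  exact ⟨_, Y, hY, hM⟩

theorem rank_mul_mul_of_isUnit [DecidableEq κ] [Fintype ι] [DecidableEq ι] {P : Matrix ι ι K}
    {Q : Matrix κ κ K} (hP : IsUnit P) (hQ : IsUnit Q) (M : Matrix ι κ K) :
    (P * M * Q).rank = M.rank := by
  rw [rank_mul_eq_left_of_isUnit_det _ _ ((isUnit_iff_isUnit_det _).1 hQ),
    rank_mul_eq_right_of_isUnit_det _ _ ((isUnit_iff_isUnit_det _).1 hP)]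

theorem rank_gram_mul_mul_of_symplectic [DecidableEq κ] [Fintype ι] {J g : Matrix ι ι K}
    {H : Matrix κ κ K} (hgJ : gᵀ * J * g = J) (hH : IsUnit H) (B : Matrix ι κ K) :
    ((g * B * H)ᵀ * J * (g * B * H)).rank = (Bᵀ * J * B).rank := by
  rw [show (g * B * H)ᵀ * J * (g * B * H) = Hᵀ * (Bᵀ * (gᵀ * J * g) * B) * H by
    simp only [transpose_mul, Matrix.mul_assoc], hgJ,
    rank_mul_mul_of_isUnit ((isUnit_transpose H).2 hH) hH]

end Matrix

end LinearAlgebra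

section SymplecticBasis

variable {K V : Type*} [Field K] [AddCommGroup V] [Module K V] {ω : BilinForm K V} {k : ℕ}

-- `Matrix.J = fromBlocks 0 (-1) 1 0`: the pairs are `ω (b (inr i)) (b (inl j)) = δᵢⱼ`.
structure IsSymplecticBasis (ω : BilinForm K V) (b : Fin k ⊕ Fin k → V) : Prop where
  gram : ∀ p q, ω (b p) (b q) = Matrix.J (Fin k) K p q
  span_eq_top : span K (range b) = ⊤

namespace IsSymplecticBasis

variable {b : Fin k ⊕ Fin k → V}

theorem linearIndependent (hb : IsSymplecticBasis ω b) : LinearIndependent K b := by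
  refine Fintype.linearIndependent_iff.2 fun a ha => ?_
  have hvec : a ᵥ* Matrix.J (Fin k) K = 0 := funext fun q => by
    simpa [← hb.gram, vecMul, dotProduct, map_sum] using congrArg (ω · (b q)) ha
  exact congrFun (eq_zero_of_vecMul_eq_zero (isUnit_det_J _ _).ne_zero hvec)

noncomputable def basis (hb : IsSymplecticBasis ω b) : Basis (Fin k ⊕ Fin k) K V :=
  .mk hb.linearIndependent hb.span_eq_top.ge

@[simp] theorem basis_apply (hb : IsSymplecticBasis ω b) (p : Fin k ⊕ Fin k) :
    hb.basis p = b p :=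
  Basis.mk_apply _ _ _

theorem finrank_eq (hb : IsSymplecticBasis ω b) : finrank K V = k + k := by
  simp [finrank_eq_card_basis hb.basis]

end IsSymplecticBasis

variable {x y : V}

theorem LinearMap.BilinForm.exists_apply_eq_one (hnd : ω.Nondegenerate) (hx : x ≠ 0) :
    ∃ y, ω y x = 1 := by
  obtain ⟨z, hz⟩ : ∃ z, ω z x ≠ 0 := by
    by_contra! h
    exact hx (hnd.2 x h)
  exact ⟨(ω z x)⁻¹ • z, by simp [hz]⟩

theorem LinearMap.BilinForm.mem_orthogonal_span_pair {v : V} :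
    v ∈ ω.orthogonal (span K {x, y}) ↔ ω x v = 0 ∧ ω y v = 0 := by
  refine ⟨fun h => ⟨h x (subset_span (by simp)), h y (subset_span (by simp))⟩,
    fun ⟨hx, hy⟩ n hn => ?_⟩
  obtain ⟨a, b, rfl⟩ := mem_span_pair.1 hn
  simp [hx, hy]

section FiniteDimensional

variable [FiniteDimensional K V]

theorem LinearMap.BilinForm.isCompl_span_pair_orthogonal (hω : ω.IsAlt) (hxy : ω y x = 1) :
    IsCompl (span K {x, y}) (ω.orthogonal (span K {x, y})) := by
  refine (isCompl_orthogonal_iff_disjoint hω.isRefl).2 (disjoint_def.2 fun v hv hv' => ?_)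
  obtain ⟨a, b, rfl⟩ := mem_span_pair.1 hv
  have hyx : ω x y = -1 := by rw [← hω.neg_eq, hxy]
  obtain ⟨h1, h2⟩ := mem_orthogonal_span_pair.1 hv'
  simp only [map_add, map_smul, hω.self_eq_zero, smul_eq_mul, mul_zero, hyx, mul_neg, mul_one,
    zero_add, neg_eq_zero, hxy, add_zero] at h1 h2
  simp [h1, h2]

theorem LinearMap.BilinForm.nondegenerate_restrict_orthogonal_span_pair (hω : ω.IsAlt)
    (hnd : ω.Nondegenerate) (hxy : ω y x = 1) :
    (ω.restrict (ω.orthogonal (span K {x, y}))).Nondegenerate := by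
  refine ω.nondegenerate_restrict_of_disjoint_orthogonal hω.isRefl ?_
  rw [orthogonal_orthogonal hnd hω.isRefl]
  exact (isCompl_span_pair_orthogonal hω hxy).symm.disjoint

theorem LinearMap.BilinForm.finrank_orthogonal_span_pair_lt (hxy : ω y x = 1) :
    finrank K (ω.orthogonal (span K {x, y})) < finrank K V := by
  refine Submodule.finrank_lt fun htop => ?_
  have hx : x ∈ ω.orthogonal (span K {x, y}) := htop ▸ mem_top
  simp [(mem_orthogonal_span_pair.1 hx).2] at hxy

theorem IsSymplecticBasis.cons (hω : ω.IsAlt) (hxy : ω y x = 1)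
    {e f : Fin k → ω.orthogonal (span K {x, y})}
    (h : IsSymplecticBasis (ω.restrict _) (Sum.elim e f)) :
    IsSymplecticBasis ω (Sum.elim (Fin.cons x ((↑) ∘ e)) (Fin.cons y ((↑) ∘ f))) where
  gram p q := by
    have hyx : ω x y = -1 := by rw [← hω.neg_eq, hxy]
    have hperp (v : ω.orthogonal (span K {x, y})) :
        ω x v = 0 ∧ ω y v = 0 ∧ ω v x = 0 ∧ ω v y = 0 := by
      obtain ⟨h1, h2⟩ := LinearMap.BilinForm.mem_orthogonal_span_pair.1 v.2
      exact ⟨h1, h2, hω.isRefl _ _ h1, hω.isRefl _ _ h2⟩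
    have hgram (p q) : ω ((Sum.elim e f p : ω.orthogonal (span K {x, y})) : V)
        (Sum.elim e f q : ω.orthogonal (span K {x, y})) = Matrix.J (Fin k) K p q := h.gram p q
    have hee (i j) := hgram (.inl i) (.inl j)
    have hef (i j) := hgram (.inl i) (.inr j)
    have hfe (i j) := hgram (.inr i) (.inl j)
    have hff (i j) := hgram (.inr i) (.inr j)
    simp only [Sum.elim_inl, Sum.elim_inr] at hee hef hfe hff
    rcases p with i | i <;> rcases q with j | j <;> cases i using Fin.cases <;>
      cases j using Fin.cases <;>
      simp [Matrix.J, hω.self_eq_zero, hxy, hyx, hperp, one_apply, hee, hef, hfe, hff,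
        (Fin.succ_ne_zero _).symm]
  span_eq_top := by
    rw [eq_top_iff, ← (ω.isCompl_span_pair_orthogonal hω hxy).sup_eq_top, sup_le_iff, span_le]
    refine ⟨?_, fun v hv => ?_⟩
    · rintro _ (rfl | rfl)
      exacts [subset_span ⟨.inl 0, rfl⟩, subset_span ⟨.inr 0, rfl⟩]
    · have hv' := mem_map_of_mem (f := (ω.orthogonal (span K {x, y})).subtype)
        (h.span_eq_top ▸ mem_top : (⟨v, hv⟩ : ω.orthogonal (span K {x, y})) ∈ _)
      rw [map_span] at hv'
      refine span_mono ?_ hv'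
      rintro _ ⟨_, ⟨i | i, rfl⟩, rfl⟩
      exacts [⟨.inl i.succ, rfl⟩, ⟨.inr i.succ, rfl⟩]

end FiniteDimensional

theorem Fin.image_cons_setOf_lt_succ {α : Type*} (x : α) (E : Fin k → α) (a : ℕ) :
    Fin.cons x E '' {i : Fin (k + 1) | (i : ℕ) < a + 1} = insert x (E '' {i | (i : ℕ) < a}) := by
  ext v
  simp only [mem_image, mem_insert_iff, mem_ofPred_eq]
  constructor
  · rintro ⟨i, hi, rfl⟩
    cases i using Fin.cases with
    | zero => exact .inl rfl
    | succ i => exact .inr ⟨i, by simpa using hi, rfl⟩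
  · rintro (rfl | ⟨i, hi, rfl⟩)
    exacts [⟨0, by simp, rfl⟩, ⟨i.succ, by simpa using hi, rfl⟩]

-- `(e i, f i)` for `i < c` are hyperbolic pairs in the subspace and `e i` for `c ≤ i < c + d`
-- complete them to a basis of it.
variable (K) in
def adaptedSpan (e f : Fin k → V) (c d : ℕ) : Submodule K V :=
  span K (e '' {i | (i : ℕ) < c + d} ∪ f '' {i | (i : ℕ) < c})

theorem adaptedSpan_cons_succ (E F : Fin k → V) (c d : ℕ) :
    adaptedSpan K (Fin.cons x E) (Fin.cons y F) (c + 1) d =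
      span K {x, y} ⊔ adaptedSpan K E F c d := by
  rw [adaptedSpan, adaptedSpan, Nat.add_right_comm, Fin.image_cons_setOf_lt_succ,
    Fin.image_cons_setOf_lt_succ, ← span_union, insert_union, union_insert, insert_union,
    singleton_union]

theorem adaptedSpan_cons_zero (E F : Fin k → V) (d : ℕ) :
    adaptedSpan K (Fin.cons x E) (Fin.cons y F) 0 (d + 1) = span K {x} ⊔ adaptedSpan K E F 0 d := by
  rw [adaptedSpan, adaptedSpan, zero_add, zero_add, Fin.image_cons_setOf_lt_succ]
  simp [span_insert]

@[simp] theorem adaptedSpan_zero_zero (e f : Fin k → V) : adaptedSpan K e f 0 0 = ⊥ := by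
  simp [adaptedSpan]

theorem adaptedSpan_comp_subtype {p : Submodule K V} (e f : Fin k → p) (c d : ℕ) :
    adaptedSpan K ((↑) ∘ e) ((↑) ∘ f) c d = (adaptedSpan K e f c d).map p.subtype := by
  rw [adaptedSpan, adaptedSpan, map_span, image_union, image_comp, image_comp]
  rfl

variable (ω) in
def HasAdaptedSymplecticBasis (W : Submodule K V) : Prop :=
  ∃ (k c d : ℕ) (e f : Fin k → V),
    c + d ≤ k ∧ IsSymplecticBasis ω (Sum.elim e f) ∧ adaptedSpan K e f c d = W

theorem IsSymplecticBasis.eq_zero_of_isotropic {e f : Fin k → V} {c d : ℕ}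
    (hb : IsSymplecticBasis ω (Sum.elim e f)) (hcd : c + d ≤ k)
    (hW : ∀ v ∈ adaptedSpan K e f c d, ∀ w ∈ adaptedSpan K e f c d, ω v w = 0) : c = 0 := by
  by_contra hc
  have hk : 0 < k := by omega
  have he : e ⟨0, hk⟩ ∈ adaptedSpan K e f c d :=
    subset_span (.inl ⟨_, show 0 < c + d by omega, rfl⟩)
  have hf : f ⟨0, hk⟩ ∈ adaptedSpan K e f c d :=
    subset_span (.inr ⟨_, show 0 < c by omega, rfl⟩)
  simpa [Matrix.J, hW _ hf _ he] using hb.gram (.inr ⟨0, hk⟩) (.inl ⟨0, hk⟩)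

namespace HasAdaptedSymplecticBasis

variable [FiniteDimensional K V] {W : Submodule K V}

theorem of_restrict_of_mem (hω : ω.IsAlt) (hxy : ω y x = 1) (hx : x ∈ W) (hy : y ∈ W)
    (h : HasAdaptedSymplecticBasis (ω.restrict _)
      (W.comap (ω.orthogonal (span K {x, y})).subtype)) :
    HasAdaptedSymplecticBasis ω W := by
  obtain ⟨k, c, d, e, f, hcd, hb, hW⟩ := h
  refine ⟨k + 1, c + 1, d, _, _, by omega, hb.cons hω hxy, ?_⟩
  have hPW : span K {x, y} ≤ W := span_le.2 (insert_subset hx (singleton_subset_iff.2 hy))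
  rw [adaptedSpan_cons_succ, adaptedSpan_comp_subtype, hW, map_comap_subtype,
    ← sup_inf_assoc_of_le _ hPW, (ω.isCompl_span_pair_orthogonal hω hxy).sup_eq_top, top_inf_eq]

theorem of_restrict_of_isotropic (hω : ω.IsAlt) (hxy : ω y x = 1) (hx : x ∈ W)
    (hW : ∀ v ∈ W, ∀ w ∈ W, ω v w = 0)
    (h : HasAdaptedSymplecticBasis (ω.restrict _)
      (W.comap (ω.orthogonal (span K {x, y})).subtype)) :
    HasAdaptedSymplecticBasis ω W := by
  obtain ⟨k, c, d, e, f, hcd, hb, hW'⟩ := h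
  obtain rfl : c = 0 := hb.eq_zero_of_isotropic hcd fun v hv w hw =>
    hW v (mem_comap.1 (hW' ▸ hv)) w (mem_comap.1 (hW' ▸ hw))
  refine ⟨k + 1, 0, d + 1, _, _, by omega, hb.cons hω hxy, ?_⟩
  rw [adaptedSpan_cons_zero, adaptedSpan_comp_subtype, hW', map_comap_subtype]
  refine le_antisymm (sup_le (span_le.2 (singleton_subset_iff.2 hx)) inf_le_right) fun w hw => ?_
  refine mem_sup.2 ⟨ω y w • x, mem_span_singleton.2 ⟨_, rfl⟩, w - ω y w • x, ⟨?_, ?_⟩, by abel⟩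
  · exact LinearMap.BilinForm.mem_orthogonal_span_pair.2
      ⟨by simp [hW x hx w hw, hω.self_eq_zero], by simp [hxy]⟩
  · exact sub_mem hw (smul_mem _ _ hx)

theorem bot_of_restrict (hω : ω.IsAlt) (hxy : ω y x = 1)
    {W' : Submodule K (ω.orthogonal (span K {x, y}))}
    (h : HasAdaptedSymplecticBasis (ω.restrict _) W') : HasAdaptedSymplecticBasis ω ⊥ := by
  obtain ⟨k, c, d, e, f, hcd, hb, -⟩ := h
  exact ⟨k + 1, 0, 0, _, _, by omega, hb.cons hω hxy, adaptedSpan_zero_zero _ _⟩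

end HasAdaptedSymplecticBasis

theorem LinearMap.BilinForm.IsAlt.hasAdaptedSymplecticBasis [FiniteDimensional K V] (hω : ω.IsAlt)
    (hnd : ω.Nondegenerate) (W : Submodule K V) : HasAdaptedSymplecticBasis ω W := by
  induction hn : finrank K V using Nat.strong_induction_on generalizing V with
  | _ n ih =>
  rcases subsingleton_or_nontrivial V with hV | hV
  · refine ⟨0, 0, 0, Fin.elim0, Fin.elim0, le_rfl, ⟨fun p => p.elim Fin.elim0 Fin.elim0, ?_⟩, ?_⟩
    · exact Subsingleton.elim _ _
    · simp [Subsingleton.elim W ⊥]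
  have step {x y : V} (hxy : ω y x = 1) (W' : Submodule K (ω.orthogonal (span K {x, y}))) :
      HasAdaptedSymplecticBasis (ω.restrict _) W' :=
    ih _ (hn ▸ ω.finrank_orthogonal_span_pair_lt hxy) (ω := ω.restrict _) (fun v => hω v)
      (ω.nondegenerate_restrict_orthogonal_span_pair hω hnd hxy) W' rfl
  by_cases hiso : ∀ v ∈ W, ∀ w ∈ W, ω v w = 0
  · obtain ⟨x, hx0, hx⟩ : ∃ x ≠ 0, x ∈ W ∨ W = ⊥ := by
      by_cases hW : W = ⊥
      · obtain ⟨x, hx⟩ := exists_ne (0 : V)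
        exact ⟨x, hx, .inr hW⟩
      · obtain ⟨x, hx, hx0⟩ := exists_mem_ne_zero_of_ne_bot hW
        exact ⟨x, hx0, .inl hx⟩
    obtain ⟨y, hxy⟩ := ω.exists_apply_eq_one hnd hx0
    rcases hx with hx | rfl
    · exact .of_restrict_of_isotropic hω hxy hx hiso (step hxy _)
    · exact .bot_of_restrict hω hxy (step hxy ⊥)
  · push Not at hiso
    obtain ⟨v, hv, w, hw, hvw⟩ := hiso
    have hxy : ω v ((ω v w)⁻¹ • w) = 1 := by simp [hvw]
    exact .of_restrict_of_mem hω hxy (smul_mem _ _ hw) hv (step hxy _)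

end SymplecticBasis

section AdaptedMatrix

variable {K ι κ : Type*} {k c d : ℕ}

def adaptedIndex (hcd : c + d ≤ k) : (Fin c ⊕ Fin c) ⊕ Fin d → Fin k ⊕ Fin k
  | .inl (.inl i) => .inl (Fin.castLE (by omega) i)
  | .inl (.inr i) => .inr (Fin.castLE (by omega) i)
  | .inr j => .inl ⟨c + j, by omega⟩

theorem adaptedIndex_injective (hcd : c + d ≤ k) : Function.Injective (adaptedIndex hcd) := by
  rintro ((i | i) | i) ((j | j) | j) h <;>
    simp only [adaptedIndex, Sum.inl.injEq, Sum.inr.injEq, reduceCtorEq, Fin.ext_iff,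
      Fin.val_castLE, Nat.add_left_cancel_iff] at h ⊢ <;>
    omega

theorem submatrix_J_adaptedIndex [CommRing K] (hcd : c + d ≤ k) :
    (Matrix.J (Fin k) K).submatrix (adaptedIndex hcd) (adaptedIndex hcd) =
      fromBlocks (Matrix.J (Fin c) K) 0 0 0 := by
  ext ((i | i) | i) ((j | j) | j) <;>
    simp only [Matrix.J, submatrix_apply, adaptedIndex, fromBlocks_apply₁₁, fromBlocks_apply₁₂,
      fromBlocks_apply₂₁, fromBlocks_apply₂₂, Matrix.zero_apply, Matrix.neg_apply, one_apply,
      Fin.ext_iff, Fin.val_castLE, neg_eq_zero, ite_eq_right_iff] <;>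
    omega

theorem range_sumElim_comp_adaptedIndex {V : Type*} (e f : Fin k → V) (hcd : c + d ≤ k) :
    range (Sum.elim e f ∘ adaptedIndex hcd) =
      e '' {i | (i : ℕ) < c + d} ∪ f '' {i | (i : ℕ) < c} := by
  ext v
  constructor
  · rintro ⟨(i | i) | i, rfl⟩
    · exact .inl ⟨_, show (i : ℕ) < c + d by omega, rfl⟩
    · exact .inr ⟨_, show (i : ℕ) < c by omega, rfl⟩
    · exact .inl ⟨_, show c + (i : ℕ) < c + d by omega, rfl⟩
  · rintro (⟨i, hi, rfl⟩ | ⟨i, hi, rfl⟩)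
    · by_cases hic : (i : ℕ) < c
      · exact ⟨.inl (.inl ⟨i, hic⟩), rfl⟩
      · refine ⟨.inr ⟨i - c, by have : (i : ℕ) < c + d := hi; omega⟩, ?_⟩
        simp only [Function.comp_apply, adaptedIndex, Sum.elim_inl]
        congr
        omega
    · exact ⟨.inl (.inr ⟨i, hi⟩), rfl⟩

def adaptedMatrix (b : Fin k ⊕ Fin k → ι → K) (hcd : c + d ≤ k) :
    Matrix ι ((Fin c ⊕ Fin c) ⊕ Fin d) K :=
  of fun i p => b (adaptedIndex hcd p) i

theorem adaptedMatrix_col (b : Fin k ⊕ Fin k → ι → K) (hcd : c + d ≤ k) :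
    (adaptedMatrix b hcd).col = b ∘ adaptedIndex hcd :=
  rfl

variable [Field K] [Fintype ι]

theorem mul_adaptedMatrix {b b' : Fin k ⊕ Fin k → ι → K} {hcd : c + d ≤ k} {g : Matrix ι ι K}
    (hg : ∀ p, g *ᵥ b' p = b p) : g * adaptedMatrix b' hcd = adaptedMatrix b hcd := by
  ext i p
  simp [adaptedMatrix, mul_apply, ← hg, mulVec, dotProduct]

variable [DecidableEq ι] {J : Matrix ι ι K}

theorem transpose_mul_mul_apply (N : Matrix ι κ K) (p q : κ) :
    (Nᵀ * J * N) p q = toBilin' J (N.col p) (N.col q) := by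
  simp only [mul_apply, transpose_apply, Finset.sum_mul, mul_assoc, toBilin'_apply', dotProduct,
    col_apply, mulVec, Finset.mul_sum]
  exact Finset.sum_comm

variable [Fintype κ] {b : Fin k ⊕ Fin k → ι → K} {hcd : c + d ≤ k}
  {X : Matrix ((Fin c ⊕ Fin c) ⊕ Fin d) κ K} {Y : Matrix κ ((Fin c ⊕ Fin c) ⊕ Fin d) K}

theorem rank_adaptedMatrix_mul (hb : IsSymplecticBasis (toBilin' J) b) (hXY : X * Y = 1) :
    (adaptedMatrix b hcd * X).rank = 2 * c + d := by
  rw [rank_mul_eq_left_of_mul_eq_one hXY, rank_eq_finrank_span_cols, adaptedMatrix_col,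
    finrank_span_eq_card (hb.linearIndependent.comp _ (adaptedIndex_injective hcd))]
  simp only [Fintype.card_sum, Fintype.card_fin]
  ring

theorem rank_gram_adaptedMatrix_mul (hb : IsSymplecticBasis (toBilin' J) b) (hXY : X * Y = 1) :
    ((adaptedMatrix b hcd * X)ᵀ * J * (adaptedMatrix b hcd * X)).rank = 2 * c := by
  have hG : (adaptedMatrix b hcd)ᵀ * J * adaptedMatrix b hcd =
      fromBlocks (Matrix.J (Fin c) K) 0 0 0 := by
    rw [← submatrix_J_adaptedIndex hcd]
    ext p q
    rw [transpose_mul_mul_apply]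
    exact hb.gram _ _
  rw [show (adaptedMatrix b hcd * X)ᵀ * J * (adaptedMatrix b hcd * X) =
      Xᵀ * ((adaptedMatrix b hcd)ᵀ * J * adaptedMatrix b hcd) * X by
    simp [transpose_mul, Matrix.mul_assoc], hG, rank_transpose_mul_fromBlocks_zero_mul hXY,
    rank_of_isUnit _ ((isUnit_iff_isUnit_det _).2 (isUnit_det_J _ _))]
  simp only [Fintype.card_sum, Fintype.card_fin]
  ring

theorem exists_symplectic_mulVec_eq {b' : Fin k ⊕ Fin k → ι → K}
    (hb : IsSymplecticBasis (toBilin' J) b) (hb' : IsSymplecticBasis (toBilin' J) b') :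
    ∃ g : Matrix ι ι K, IsUnit g ∧ gᵀ * J * g = J ∧ ∀ p, g *ᵥ b' p = b p := by
  let φ := hb'.basis.equiv hb.basis (Equiv.refl _)
  have hφ (p) : φ (b' p) = b p := by
    simpa using hb'.basis.equiv_apply p hb.basis (Equiv.refl _)
  refine ⟨LinearMap.toMatrix' φ, LinearMap.isUnit_toMatrix'_iff.2
    ((Module.End.isUnit_iff _).2 φ.bijective), toBilin'.injective ?_, fun p => ?_⟩
  · rw [← toBilin'_comp, toLin'_toMatrix']
    refine LinearMap.BilinForm.ext_basis hb'.basis fun p q => ?_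
    simp [hφ, hb.gram, hb'.gram]
  · rw [← toLin'_apply, toLin'_toMatrix']
    exact hφ p

theorem isAlt_toBilin'_of_transpose_eq_neg [NeZero (2 : K)] (hJ : Jᵀ = -J) :
    (toBilin' J).IsAlt := fun x => by
  have h : x ⬝ᵥ J *ᵥ x = -(x ⬝ᵥ J *ᵥ x) := by
    conv_lhs => rw [dotProduct_mulVec, ← mulVec_transpose, dotProduct_comm, hJ, neg_mulVec,
      dotProduct_neg]
  have h2 : (2 : K) * toBilin' J x x = 0 := by rw [toBilin'_apply']; linear_combination h
  exact (mul_eq_zero.1 h2).resolve_left two_ne_zero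

theorem exists_eq_adaptedMatrix_mul [DecidableEq κ] (hω : (toBilin' J).IsAlt)
    (hnd : (toBilin' J).Nondegenerate) (M : Matrix ι κ K) :
    ∃ (k c d : ℕ) (hcd : c + d ≤ k) (b : Fin k ⊕ Fin k → ι → K)
      (X : Matrix ((Fin c ⊕ Fin c) ⊕ Fin d) κ K) (Y : Matrix κ ((Fin c ⊕ Fin c) ⊕ Fin d) K),
      IsSymplecticBasis (toBilin' J) b ∧ X * Y = 1 ∧ M = adaptedMatrix b hcd * X := by
  obtain ⟨k, c, d, e, f, hcd, hb, hW⟩ :=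
    hω.hasAdaptedSymplecticBasis hnd (LinearMap.range M.mulVecLin)
  have hN : Function.Injective (adaptedMatrix (Sum.elim e f) hcd).mulVec :=
    mulVec_injective_iff.2 (hb.linearIndependent.comp _ (adaptedIndex_injective hcd))
  obtain ⟨X, Y, hXY, hM⟩ := exists_mul_eq_of_range_eq hN (by
    rw [← hW, adaptedSpan, ← range_sumElim_comp_adaptedIndex, range_mulVecLin, adaptedMatrix_col])
  exact ⟨k, c, d, hcd, _, X, Y, hb, hXY, hM⟩

theorem exists_symplectic_eq_mul_mul_of_rank_eq [DecidableEq κ] (hω : (toBilin' J).IsAlt)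
    (hnd : (toBilin' J).Nondegenerate) {A B : Matrix ι κ K} (hrank : A.rank = B.rank)
    (hgram : (Aᵀ * J * A).rank = (Bᵀ * J * B).rank) :
    ∃ (g : Matrix ι ι K) (H : Matrix κ κ K), IsUnit g ∧ IsUnit H ∧ gᵀ * J * g = J ∧
      A = g * B * H := by
  obtain ⟨k, c, d, hcd, b, X, Y, hb, hXY, rfl⟩ := exists_eq_adaptedMatrix_mul hω hnd A
  obtain ⟨k', c', d', hcd', b', X', Y', hb', hXY', rfl⟩ := exists_eq_adaptedMatrix_mul hω hnd B
  rw [rank_adaptedMatrix_mul hb hXY, rank_adaptedMatrix_mul hb' hXY'] at hrank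
  rw [rank_gram_adaptedMatrix_mul hb hXY, rank_gram_adaptedMatrix_mul hb' hXY'] at hgram
  obtain rfl : k = k' := by have := hb.finrank_eq; have := hb'.finrank_eq; omega
  obtain rfl : c = c' := by omega
  obtain rfl : d = d' := by omega
  obtain ⟨g, hg, hgJ, hgb⟩ := exists_symplectic_mulVec_eq hb hb'
  obtain ⟨H, hH, rfl⟩ := exists_isUnit_eq_mul_of_mul_eq_one hXY hXY'
  exact ⟨g, H, hg, hH, hgJ, by rw [← Matrix.mul_assoc g, mul_adaptedMatrix hgb, Matrix.mul_assoc]⟩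

end AdaptedMatrix

/-- Let `J` be an invertible skew-symmetric `2n×2n` complex matrix and
`Sp_{2n}(ℂ) = {g ∈ GL_{2n}(ℂ) : gᵀ J g = J}`. Two `2n×m` complex matrices `A`, `B`
lie in the same orbit of `Sp_{2n}(ℂ) × GL_m(ℂ)` acting by `(g,h)·M = g M h⁻¹`
iff `rank A = rank B` and `rank (Aᵀ J A) = rank (Bᵀ J B)`. -/
theorem stmt_15 (n m : ℕ) (J : Matrix (Fin (2 * n)) (Fin (2 * n)) ℂ)
    (hJunit : IsUnit J) (hJskew : Jᵀ = -J)
    (A B : Matrix (Fin (2 * n)) (Fin m) ℂ) :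
    (∃ (g : Matrix.GeneralLinearGroup (Fin (2 * n)) ℂ)
        (h : Matrix.GeneralLinearGroup (Fin m) ℂ),
      (g : Matrix (Fin (2 * n)) (Fin (2 * n)) ℂ)ᵀ * J *
          (g : Matrix (Fin (2 * n)) (Fin (2 * n)) ℂ) = J ∧
      A = (g : Matrix (Fin (2 * n)) (Fin (2 * n)) ℂ) * B *
          ((h⁻¹ : Matrix.GeneralLinearGroup (Fin m) ℂ) : Matrix (Fin m) (Fin m) ℂ)) ↔
    (A.rank = B.rank ∧ (Aᵀ * J * A).rank = (Bᵀ * J * B).rank) := by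
  constructor
  · rintro ⟨g, h, hg, rfl⟩
    exact ⟨rank_mul_mul_of_isUnit g.isUnit (h⁻¹).isUnit B,
      rank_gram_mul_mul_of_symplectic hg (h⁻¹).isUnit B⟩
  · rintro ⟨hrank, hgram⟩
    have hnd : (toBilin' J).Nondegenerate :=
      LinearMap.BilinForm.nondegenerate_toBilin'_iff_det_ne_zero.2
        ((isUnit_iff_isUnit_det J).1 hJunit).ne_zero
    obtain ⟨g, H, hg, hH, hgJ, rfl⟩ := exists_symplectic_eq_mul_mul_of_rank_eq
      (isAlt_toBilin'_of_transpose_eq_neg hJskew) hnd hrank hgram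
    exact ⟨hg.unit, hH.unit⁻¹, hgJ, by simp⟩
end
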